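/- arXiv:1707.04286 — 5 statements merged into one kernel-verified Lean document; each statement's English description precedes it below -/
import Mathlib

section
/- For every integer n ≥ -1, the n-th Fourier coefficient c(n) of the eta quotient η(τ)^24/η(2τ)^24 = q^{-1}∏_{n≥1}(1-q^n)^{24}/(1-q^{2n})^{24} satisfies (-1)^{n+1} c(n) > 0; that is, c(n) > 0 when n is odd and c(n) < 0 when n is even. -/
/-!
Since `∏ (1 - qⁿ) = ∏ (1 - q²ⁿ) · ∏ (1 - q²ⁿ⁻¹)`, the series `q · η(τ)²⁴/η(2τ)²⁴` is
`∏_{m ≥ 1} (1 - q²ᵐ⁻¹)²⁴`, i.e. `∏ (1 + q²ᵐ⁻¹)²⁴` evaluated at `-q`, so `c(N - 1)` is `(-1)ᴺ` times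
the `qᴺ`-coefficient of `∏ (1 + q²ᵐ⁻¹)²⁴`. That product has nonnegative coefficients, and the
`qᴺ`-coefficient is positive: `N` is odd, or `N = 1 + (N - 1)` with `N - 1` odd, or `N = 2`, which
`(1 + q)²⁴` alone reaches. Every identity is only needed modulo `q^(N+1)`, and `c` is determined
recursively by the defining relation because `∏ (1 - q²ᵐ)²⁴` has constant term `1`.
-/

open Polynomial

/-- `c : ℤ → ℤ` is the coefficient sequence of the formal Laurent series
`q⁻¹ ∏_{m≥1} (1-q^m)^24 (1-q^{2m})^{-24} = ∑_{n ≥ -1} c(n) qⁿ`: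
it vanishes below `-1`, and for every `N` the coefficient of `q^N` in
`(∑_{n=-1}^{N+1} c(n) q^{n+1}) · ∏_{m=1}^{N} (1-q^{2m})^{24}` agrees with that of
`∏_{m=1}^{N} (1-q^m)^{24}` (factors with `m > N` do not affect this coefficient). -/
def IsEtaQuotCoeff (c : ℤ → ℤ) : Prop :=
  (∀ n : ℤ, n < -1 → c n = 0) ∧
  ∀ N : ℕ,
    ((∑ n ∈ Finset.range (N + 2), C (c ((n : ℤ) - 1)) * X ^ n) *
        ∏ m ∈ Finset.Icc 1 N, ((1 : ℤ[X]) - X ^ (2 * m)) ^ 24).coeff N =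
      (∏ m ∈ Finset.Icc 1 N, ((1 : ℤ[X]) - X ^ m) ^ 24).coeff N

open Finset

lemma Finset.prod_Icc_one_two_mul_add_one_eq_even_mul_odd {M : Type*} [CommMonoid M]
    (f : ℕ → M) (N : ℕ) :
    ∏ j ∈ Icc 1 (2 * N + 1), f j =
      (∏ m ∈ Icc 1 N, f (2 * m)) * ∏ m ∈ range (N + 1), f (2 * m + 1) := by
  induction N with
  | zero => simp
  | succ N ih =>
    rw [show 2 * (N + 1) + 1 = 2 * N + 1 + 1 + 1 by ring, prod_Icc_succ_top (by omega),
      prod_Icc_succ_top (by omega), ih, prod_Icc_succ_top (by omega), prod_range_succ _ (N + 1),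
      show 2 * N + 1 + 1 = 2 * (N + 1) by ring]
    ac_rfl

namespace Polynomial

variable {R ι : Type*}

section OrderedSemiring

variable [CommSemiring R] [PartialOrder R] [IsOrderedRing R]

lemma coeff_mul_nonneg {p q : R[X]} (hp : ∀ i, 0 ≤ p.coeff i) (hq : ∀ i, 0 ≤ q.coeff i)
    (n : ℕ) : 0 ≤ (p * q).coeff n := by
  rw [coeff_mul]
  exact sum_nonneg fun x _ => mul_nonneg (hp _) (hq _)

lemma coeff_prod_nonneg {s : Finset ι} {f : ι → R[X]} (hf : ∀ m ∈ s, ∀ i, 0 ≤ (f m).coeff i)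
    (n : ℕ) : 0 ≤ (∏ m ∈ s, f m).coeff n :=
  prod_induction f (fun p => ∀ i, 0 ≤ p.coeff i) (fun _ _ => coeff_mul_nonneg)
    (fun i => by rw [coeff_one]; split_ifs <;> simp) hf n

lemma coeff_mul_le_coeff_mul_add {p q : R[X]} (hp : ∀ i, 0 ≤ p.coeff i)
    (hq : ∀ i, 0 ≤ q.coeff i) (i j : ℕ) : p.coeff i * q.coeff j ≤ (p * q).coeff (i + j) := by
  rw [coeff_mul]
  exact single_le_sum (f := fun x : ℕ × ℕ => p.coeff x.1 * q.coeff x.2)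
    (fun x _ => mul_nonneg (hp _) (hq _)) (a := (i, j)) (mem_antidiagonal.mpr rfl)

lemma coeff_prod_le_coeff_prod_of_subset [DecidableEq ι] {s t : Finset ι} {f : ι → R[X]}
    (hts : t ⊆ s) (hf : ∀ m ∈ s, ∀ i, 0 ≤ (f m).coeff i) (hf0 : ∀ m ∈ s, (f m).coeff 0 = 1)
    (n : ℕ) : (∏ m ∈ t, f m).coeff n ≤ (∏ m ∈ s, f m).coeff n := by
  rw [← prod_sdiff hts, mul_comm]
  have hrest0 : (∏ m ∈ s \ t, f m).coeff 0 = 1 := by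
    rw [coeff_zero_prod]
    exact prod_eq_one fun m hm => hf0 m (mem_sdiff.mp hm).1
  simpa [hrest0] using coeff_mul_le_coeff_mul_add
    (coeff_prod_nonneg fun m hm => hf m (hts hm))
    (coeff_prod_nonneg (s := s \ t) fun m hm => hf m (mem_sdiff.mp hm).1) n 0

end OrderedSemiring

lemma coeff_one_add_X_pow_pow [CommSemiring R] {j : ℕ} (hj : 0 < j) (e n : ℕ) :
    ((1 + X ^ j : R[X]) ^ e).coeff n = if j ∣ n then (e.choose (n / j) : R) else 0 := by
  rw [show (1 + X ^ j : R[X]) ^ e = expand R j ((1 + X) ^ e) by simp [expand_X],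
    coeff_expand hj, coeff_one_add_X_pow]

end Polynomial

section CommRing

variable {R ι : Type*} [CommRing R]

lemma dvd_pow_sub_one_of_dvd_sub_one {x a : R} (h : x ∣ a - 1) (e : ℕ) : x ∣ a ^ e - 1 :=
  h.trans (by simpa using sub_dvd_pow_sub_pow a 1 e)

lemma dvd_prod_sub_one {x : R} {s : Finset ι} {f : ι → R} (h : ∀ i ∈ s, x ∣ f i - 1) :
    x ∣ ∏ i ∈ s, f i - 1 :=
  prod_induction f (fun a => x ∣ a - 1)
    (fun a b ha hb => by
      rw [show a * b - 1 = a * (b - 1) + (a - 1) by ring]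
      exact dvd_add (dvd_mul_of_dvd_right hb a) ha)
    (by simp) h

namespace Polynomial

lemma coeff_comp_neg_X (p : R[X]) (n : ℕ) : (p.comp (-X)).coeff n = (-1) ^ n * p.coeff n := by
  rw [← neg_one_mul (X : R[X]), ← C_1, ← C_neg, comp_C_mul_X_coeff, mul_comm]

lemma coeff_mul_of_X_pow_dvd_sub_one {p q : R[X]} {n : ℕ} (h : X ^ (n + 1) ∣ q - 1) {i : ℕ}
    (hi : i ≤ n) : (p * q).coeff i = p.coeff i := by
  have hpq : X ^ (n + 1) ∣ p * q - p := by
    rw [← mul_sub_one]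
    exact dvd_mul_of_dvd_right h p
  rw [← sub_eq_zero, ← coeff_sub]
  exact X_pow_dvd_iff.mp hpq i (by omega)

lemma coeff_eq_of_coeff_mul_eq {p q r : R[X]} {n : ℕ} (hr : r.coeff 0 = 1)
    (hlow : ∀ i < n, p.coeff i = q.coeff i) (h : (p * r).coeff n = (q * r).coeff n) :
    p.coeff n = q.coeff n := by
  rw [coeff_mul, coeff_mul,
    Nat.sum_antidiagonal_eq_sum_range_succ (fun i j => p.coeff i * r.coeff j),
    Nat.sum_antidiagonal_eq_sum_range_succ (fun i j => q.coeff i * r.coeff j),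
    sum_range_succ, sum_range_succ, Nat.sub_self, hr, mul_one, mul_one,
    sum_congr rfl fun i hi => by rw [hlow i (mem_range.mp hi)]] at h
  exact add_left_cancel h

end Polynomial

end CommRing

noncomputable def etaFactors (e N : ℕ) : ℤ[X] := ∏ m ∈ Icc 1 N, (1 - X ^ m) ^ e

noncomputable def oddFactors (e M : ℕ) : ℤ[X] := ∏ m ∈ range M, (1 + X ^ (2 * m + 1)) ^ e

lemma oddFactors_comp_neg_X_mul (e N : ℕ) :
    (oddFactors e (N + 1)).comp (-X) * ∏ m ∈ Icc 1 N, (1 - X ^ (2 * m)) ^ e =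
      etaFactors e (2 * N + 1) := by
  rw [etaFactors, prod_Icc_one_two_mul_add_one_eq_even_mul_odd, oddFactors, Polynomial.prod_comp,
    mul_comm]
  congr 1
  refine prod_congr rfl fun m _ => ?_
  rw [pow_comp, add_comp, one_comp, X_pow_comp, Odd.neg_pow (odd_two_mul_add_one m),
    ← sub_eq_add_neg]

lemma coeff_oddFactors_of_le (e : ℕ) {n M : ℕ} (h : n ≤ M) :
    (oddFactors e M).coeff n = (oddFactors e n).coeff n := by
  rw [oddFactors, ← prod_range_mul_prod_Ico _ h]
  refine coeff_mul_of_X_pow_dvd_sub_one (dvd_prod_sub_one fun m hm => ?_) le_rfl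
  refine dvd_pow_sub_one_of_dvd_sub_one ?_ e
  rw [add_sub_cancel_left]
  exact pow_dvd_pow X (by have := (mem_Ico.mp hm).1; omega)

lemma coeff_etaFactors_of_le (e : ℕ) {n N K : ℕ} (hn : n ≤ N) (hN : N ≤ K) :
    (etaFactors e K).coeff n = (etaFactors e N).coeff n := by
  have hIoc (k : ℕ) : Icc 1 k = Ioc 0 k := Icc_add_one_left_eq_Ioc 0 k
  rw [etaFactors, etaFactors, hIoc, hIoc, ← prod_Ioc_consecutive _ (Nat.zero_le N) hN]
  refine coeff_mul_of_X_pow_dvd_sub_one (dvd_prod_sub_one fun m hm => ?_) hn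
  refine dvd_pow_sub_one_of_dvd_sub_one ?_ e
  rw [sub_sub_cancel_left, dvd_neg]
  exact pow_dvd_pow X (mem_Ioc.mp hm).1

lemma coeff_oddFactors_pos {e : ℕ} (he : 2 ≤ e) (N : ℕ) : 0 < (oddFactors e N).coeff N := by
  set g : ℕ → ℤ[X] := fun m => (1 + X ^ (2 * m + 1)) ^ e
  have hg : ∀ m i,
      (g m).coeff i = if 2 * m + 1 ∣ i then (e.choose (i / (2 * m + 1)) : ℤ) else 0 :=
    fun m i => coeff_one_add_X_pow_pow (Nat.succ_pos _) e i
  have hg_nonneg : ∀ m ∈ range N, ∀ i, 0 ≤ (g m).coeff i := by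
    intro m _ i
    rw [hg]
    split_ifs <;> positivity
  have hg_pos : ∀ m, ∀ i ≤ e, 0 < (g m).coeff ((2 * m + 1) * i) := by
    intro m i hi
    rw [hg, if_pos (dvd_mul_right _ _), Nat.mul_div_cancel_left _ (Nat.succ_pos _)]
    exact_mod_cast Nat.choose_pos hi
  have hsub : ∀ t ⊆ range N, (∏ m ∈ t, g m).coeff N ≤ (oddFactors e N).coeff N :=
    fun t ht => coeff_prod_le_coeff_prod_of_subset ht hg_nonneg (fun m _ => by simp [hg]) N
  obtain ⟨k, rfl | rfl⟩ := Nat.even_or_odd' N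
  · match k with
    | 0 => simp [oddFactors]
    | 1 =>
      refine lt_of_lt_of_le ?_ (hsub {0} (by simp))
      simpa using hg_pos 0 2 he
    | k + 2 =>
      have hpair : {0, k + 1} ⊆ range (2 * (k + 2)) := by
        intro m hm
        simp only [mem_insert, mem_singleton, mem_range] at hm ⊢
        omega
      refine lt_of_lt_of_le ?_ (hsub _ hpair)
      rw [prod_pair (by omega), show 2 * (k + 2) = 1 * 1 + (2 * (k + 1) + 1) * 1 by ring]
      exact (mul_pos (hg_pos 0 1 (by omega)) (hg_pos (k + 1) 1 (by omega))).trans_le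
        (coeff_mul_le_coeff_mul_add (hg_nonneg 0 (hpair (by simp)))
          (hg_nonneg (k + 1) (hpair (by simp))) _ _)
  · refine lt_of_lt_of_le ?_ (hsub {k} (singleton_subset_iff.mpr (mem_range.mpr (by omega))))
    simpa using hg_pos k 1 (by omega)

theorem IsEtaQuotCoeff.apply_natCast_sub_one {c : ℤ → ℤ} (hc : IsEtaQuotCoeff c) (N : ℕ) :
    c (N - 1) = (-1) ^ N * (oddFactors 24 N).coeff N := by
  induction N using Nat.strong_induction_on with
  | _ N ih =>
  set S : ℤ[X] := ∑ n ∈ range (N + 2), C (c ((n : ℤ) - 1)) * X ^ n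
  set E : ℤ[X] := ∏ m ∈ Icc 1 N, (1 - X ^ (2 * m)) ^ 24
  set O : ℤ[X] := (oddFactors 24 (N + 1)).comp (-X)
  have hS : ∀ i ≤ N, S.coeff i = c (i - 1) := fun i hi => by
    simp [S, show i < N + 2 by omega]
  have hO : ∀ i ≤ N, O.coeff i = (-1) ^ i * (oddFactors 24 i).coeff i := fun i hi => by
    rw [coeff_comp_neg_X, coeff_oddFactors_of_le 24 (by omega : i ≤ N + 1)]
  have hE : E.coeff 0 = 1 := by
    rw [coeff_zero_prod]
    exact prod_eq_one fun m hm => by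
      simp [coeff_zero_eq_eval_zero, zero_pow (by have := (mem_Icc.mp hm).1; omega : 2 * m ≠ 0)]
  have hOS : (O * E).coeff N = (S * E).coeff N := by
    rw [oddFactors_comp_neg_X_mul, coeff_etaFactors_of_le 24 le_rfl (by omega), hc.2 N, etaFactors]
  rw [← hS N le_rfl, ← hO N le_rfl]
  exact (coeff_eq_of_coeff_mul_eq hE (fun i hi => by rw [hS i hi.le, hO i hi.le, ih i hi]) hOS).symm

/-- The Fourier coefficients of `η(τ)²⁴/η(2τ)²⁴` alternate in sign: `(-1)^{n+1} c(n) > 0`,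
i.e. `c(n) > 0` for `n` odd and `c(n) < 0` for `n` even, for all `n ≥ -1`. -/
theorem eta_quotient_coeff_sign_change (c : ℤ → ℤ) (hc : IsEtaQuotCoeff c) :
    ∀ n : ℤ, -1 ≤ n → (Odd n → 0 < c n) ∧ (Even n → c n < 0) := by
  intro n hn
  obtain ⟨N, rfl⟩ : ∃ N : ℕ, n = N - 1 := ⟨(n + 1).toNat, by omega⟩
  have hpos := coeff_oddFactors_pos (by norm_num : 2 ≤ 24) N
  rw [hc.apply_natCast_sub_one N]
  refine ⟨fun hodd => ?_, fun heven => ?_⟩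
  · have : Even N := by simpa [parity_simps] using hodd
    rw [this.neg_one_pow, one_mul]
    exact hpos
  · have : Odd N := by simpa [parity_simps] using heven
    rw [this.neg_one_pow]
    linarith
end

section
/- The Fourier coefficients c(n) of the eta quotient η(τ)^24/η(2τ)^24 never vanish: c(n) ≠ 0 for all integers n ≥ -1. -/
open Polynomial

/-!
Splitting `∏ (1 - qⁿ)` into its odd and even factors, the even ones cancel against
`∏ (1 - q²ⁿ)`, so the series is `q⁻¹ ∏_{n odd} (1 - qⁿ)²⁴`. Modulo `q^(N+1)` all of this is an
identity of polynomials, and `c (N - 1)` is the coefficient of `q^N` in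
`∏_{n odd, n < 2N} (1 - qⁿ)²⁴`. Replacing `q` by `-q`, that coefficient is `±` the one of
`∏_{n odd} (1 + qⁿ)²⁴`, a polynomial with coefficients in `ℕ`, and the latter is nonzero because
`N` is a sum of odd parts each used at most twice: `N` itself if `N` is odd, `1 + (N - 1)` if it
is even.
-/

open Finset

section Truncation

variable {R : Type*} [CommRing R]

theorem Polynomial.smodEq_X_pow_iff {p q : R[X]} {n : ℕ} :
    p ≡ q [SMOD Ideal.span {X ^ n}] ↔ ∀ d < n, p.coeff d = q.coeff d := by
  simp only [SModEq.sub_mem, Ideal.mem_span_singleton, X_pow_dvd_iff, coeff_sub, sub_eq_zero]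

theorem Polynomial.one_sub_X_pow_pow_smodEq_one {j m : ℕ} (h : m ≤ j) (r : ℕ) :
    ((1 : R[X]) - X ^ j) ^ r ≡ 1 [SMOD Ideal.span {X ^ m}] := by
  have hX : (X ^ j : R[X]) ≡ 0 [SMOD Ideal.span {X ^ m}] :=
    SModEq.zero.mpr (Ideal.mem_span_singleton.mpr (pow_dvd_pow X h))
  simpa using ((SModEq.refl 1).sub hX).pow r

theorem Polynomial.prod_Icc_smodEq_prod_Icc {f : ℕ → R[X]}
    (hf : ∀ m, f m ≡ 1 [SMOD Ideal.span {X ^ m}]) {d N : ℕ} (h : d ≤ N) :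
    ∏ m ∈ Icc 1 N, f m ≡ ∏ m ∈ Icc 1 d, f m [SMOD Ideal.span {X ^ (d + 1)}] := by
  have htail : ∏ m ∈ Ioc d N, f m ≡ ∏ m ∈ Ioc d N, 1 [SMOD Ideal.span {X ^ (d + 1)}] :=
    SModEq.prod fun m hm => (hf m).mono <|
      Ideal.span_singleton_le_span_singleton.mpr (pow_dvd_pow X (mem_Ioc.mp hm).1)
  rw [prod_const_one] at htail
  have := (SModEq.refl (∏ m ∈ Ioc 0 d, f m)).mul htail
  rwa [mul_one, prod_Ioc_consecutive f (Nat.zero_le d) h, ← Icc_add_one_left_eq_Ioc,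
    zero_add] at this

theorem Polynomial.coeff_sum_range_C_mul_X_pow (a : ℕ → R) {d M : ℕ} (h : d < M) :
    (∑ n ∈ range M, C (a n) * X ^ n).coeff d = a d := by
  simp [h]

theorem Polynomial.sum_range_C_mul_X_pow_smodEq (a : ℕ → R) {d M M' : ℕ} (h : d < M)
    (h' : d < M') :
    ∑ n ∈ range M, C (a n) * X ^ n ≡ ∑ n ∈ range M', C (a n) * X ^ n
      [SMOD Ideal.span {X ^ (d + 1)}] := by
  rw [smodEq_X_pow_iff]
  intro k hk
  rw [coeff_sum_range_C_mul_X_pow a (by omega), coeff_sum_range_C_mul_X_pow a (by omega)]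

theorem Polynomial.smodEq_of_mul_smodEq_mul [IsDomain R] {p q u : R[X]} {n : ℕ}
    (hu : u.coeff 0 ≠ 0) (h : p * u ≡ q * u [SMOD Ideal.span {X ^ n}]) :
    p ≡ q [SMOD Ideal.span {X ^ n}] := by
  rw [SModEq.sub_mem, Ideal.mem_span_singleton, ← sub_mul] at h
  rw [SModEq.sub_mem, Ideal.mem_span_singleton]
  exact prime_X.pow_dvd_of_dvd_mul_right n (mt X_dvd_iff.mp hu) h

end Truncation

theorem Finset.prod_Icc_one_two_mul {M : Type*} [CommMonoid M] (f : ℕ → M) (N : ℕ) :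
    ∏ m ∈ Icc 1 (2 * N), f m = (∏ m ∈ range N, f (2 * m + 1)) * ∏ m ∈ Icc 1 N, f (2 * m) := by
  induction N with
  | zero => simp
  | succ N ih =>
    rw [show 2 * (N + 1) = 2 * N + 1 + 1 by ring, prod_Icc_succ_top (by omega),
      prod_Icc_succ_top (by omega), ih, prod_range_succ, prod_Icc_succ_top (by omega),
      mul_mul_mul_comm, ← mul_assoc]
    rfl

theorem IsEtaQuotCoeff.partialSum_mul_smodEq {c : ℤ → ℤ} (hc : IsEtaQuotCoeff c) (N : ℕ) :
    (∑ n ∈ range (N + 2), C (c (n - 1)) * X ^ n) * ∏ m ∈ Icc 1 N, ((1 : ℤ[X]) - X ^ (2 * m)) ^ 24 ≡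
      ∏ m ∈ Icc 1 N, ((1 : ℤ[X]) - X ^ m) ^ 24 [SMOD Ideal.span {X ^ (N + 1)}] := by
  rw [smodEq_X_pow_iff]
  intro d hd
  have hS := sum_range_C_mul_X_pow_smodEq (fun n => c (n - 1)) (M := N + 2) (M' := d + 2)
    (d := d) (by omega) (by omega)
  have hA := prod_Icc_smodEq_prod_Icc (f := fun m => ((1 : ℤ[X]) - X ^ (2 * m)) ^ 24)
    (fun m => one_sub_X_pow_pow_smodEq_one (by omega) 24) (Nat.le_of_lt_succ hd)
  have hB := prod_Icc_smodEq_prod_Icc (f := fun m => ((1 : ℤ[X]) - X ^ m) ^ 24)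
    (fun m => one_sub_X_pow_pow_smodEq_one le_rfl 24) (Nat.le_of_lt_succ hd)
  rw [smodEq_X_pow_iff.mp (hS.mul hA) d (lt_add_one d), hc.2 d,
    smodEq_X_pow_iff.mp hB d (lt_add_one d)]

theorem IsEtaQuotCoeff.eq_coeff_prod_odd {c : ℤ → ℤ} (hc : IsEtaQuotCoeff c) (N : ℕ) :
    c (N - 1) = (∏ m ∈ range N, ((1 : ℤ[X]) - X ^ (2 * m + 1)) ^ 24).coeff N := by
  have hA := prod_Icc_smodEq_prod_Icc (f := fun m => ((1 : ℤ[X]) - X ^ (2 * m)) ^ 24)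
    (fun m => one_sub_X_pow_pow_smodEq_one (by omega) 24) (Nat.zero_le N)
  have hA0 : (∏ m ∈ Icc 1 N, ((1 : ℤ[X]) - X ^ (2 * m)) ^ 24).coeff 0 ≠ 0 := by
    simp [smodEq_X_pow_iff.mp hA 0 one_pos]
  have hB := prod_Icc_smodEq_prod_Icc (f := fun m => ((1 : ℤ[X]) - X ^ m) ^ 24)
    (fun m => one_sub_X_pow_pow_smodEq_one le_rfl 24) (show N ≤ 2 * N by omega)
  rw [prod_Icc_one_two_mul] at hB
  have key := smodEq_of_mul_smodEq_mul hA0 ((hc.partialSum_mul_smodEq N).trans hB.symm)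
  rw [← smodEq_X_pow_iff.mp key N (lt_add_one N),
    coeff_sum_range_C_mul_X_pow (fun n => c (n - 1)) (by omega)]

section CanonicallyOrdered

variable {R : Type*} [CommSemiring R] [PartialOrder R] [CanonicallyOrderedAdd R]
  [NoZeroDivisors R]

theorem Polynomial.coeff_mul_add_ne_zero {p q : R[X]} {i j : ℕ} (hp : p.coeff i ≠ 0)
    (hq : q.coeff j ≠ 0) : (p * q).coeff (i + j) ≠ 0 := by
  rw [coeff_mul, Ne, sum_eq_zero_iff, not_forall]
  exact ⟨(i, j), by simp [hp, hq]⟩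

theorem Polynomial.coeff_prod_sum_ne_zero [Nontrivial R] {ι : Type*} (s : Finset ι)
    {f : ι → R[X]} {e : ι → ℕ} (h : ∀ i ∈ s, (f i).coeff (e i) ≠ 0) :
    (∏ i ∈ s, f i).coeff (∑ i ∈ s, e i) ≠ 0 := by
  classical
  induction s using Finset.induction_on with
  | empty => simp
  | insert a s ha ih =>
    rw [prod_insert ha, sum_insert ha]
    exact coeff_mul_add_ne_zero (h a (mem_insert_self a s))
      (ih fun i hi => h i (mem_insert_of_mem hi))

end CanonicallyOrdered

theorem Polynomial.coeff_one_add_X_pow_pow_mul {R : Type*} [CommSemiring R] {j : ℕ} (hj : 0 < j)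
    (r i : ℕ) : (((1 : R[X]) + X ^ j) ^ r).coeff (i * j) = (r.choose i : R) := by
  rw [show ((1 : R[X]) + X ^ j) ^ r = expand R j ((1 + X) ^ r) by simp, coeff_expand_mul hj,
    coeff_one_add_X_pow]

theorem exists_odd_parts_mult_le_two (N : ℕ) :
    ∃ g : ℕ → ℕ, (∀ m, g m ≤ 2) ∧ ∑ m ∈ range N, g m * (2 * m + 1) = N := by
  obtain ⟨k, rfl | rfl⟩ := Nat.even_or_odd' N
  · rcases Nat.eq_zero_or_pos k with rfl | hk
    · exact ⟨0, by simp⟩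
    refine ⟨fun m => (if m = 0 then 1 else 0) + (if m = k - 1 then 1 else 0), fun m => ?_, ?_⟩
    · beta_reduce
      split_ifs <;> simp
    · simp [add_mul, ite_mul, sum_add_distrib, sum_ite_eq', show k - 1 < 2 * k by omega, hk]
      omega
  · refine ⟨fun m => if m = k then 1 else 0, fun m => ?_, ?_⟩
    · beta_reduce
      split_ifs <;> simp
    · simp [ite_mul, sum_ite_eq']
      omega

theorem coeff_prod_one_add_X_odd_pow_ne_zero {r : ℕ} (hr : 2 ≤ r) (N : ℕ) :
    (∏ m ∈ range N, ((1 : ℕ[X]) + X ^ (2 * m + 1)) ^ r).coeff N ≠ 0 := by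
  obtain ⟨g, hg, hsum⟩ := exists_odd_parts_mult_le_two N
  have := coeff_prod_sum_ne_zero (range N) (f := fun m => ((1 : ℕ[X]) + X ^ (2 * m + 1)) ^ r)
    (e := fun m => g m * (2 * m + 1))
    fun m _ => by simpa [coeff_one_add_X_pow_pow_mul] using (Nat.choose_pos ((hg m).trans hr)).ne'
  rwa [hsum] at this

theorem coeff_prod_one_sub_X_odd_pow_ne_zero {r : ℕ} (hr : 2 ≤ r) (N : ℕ) :
    (∏ m ∈ range N, ((1 : ℤ[X]) - X ^ (2 * m + 1)) ^ r).coeff N ≠ 0 := by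
  have hcomp : ∏ m ∈ range N, ((1 : ℤ[X]) - X ^ (2 * m + 1)) ^ r =
      ((∏ m ∈ range N, ((1 : ℕ[X]) + X ^ (2 * m + 1)) ^ r).map (Nat.castRingHom ℤ)).comp
        (C (-1) * X) := by
    rw [Polynomial.map_prod, Polynomial.prod_comp]
    refine prod_congr rfl fun m _ => ?_
    simp [Odd.neg_pow ⟨m, rfl⟩, sub_eq_add_neg]
  rw [hcomp, comp_C_mul_X_coeff, coeff_map]
  simpa using coeff_prod_one_add_X_odd_pow_ne_zero hr N

/-- The Fourier coefficients of `η(τ)²⁴/η(2τ)²⁴` never vanish. -/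
theorem eta_quotient_coeff_ne_zero (c : ℤ → ℤ) (hc : IsEtaQuotCoeff c) :
    ∀ n : ℤ, -1 ≤ n → c n ≠ 0 := by
  intro n hn
  obtain ⟨N, rfl⟩ : ∃ N : ℕ, n = N - 1 := ⟨(n + 1).toNat, by omega⟩
  rw [hc.eq_coeff_prod_odd N]
  exact coeff_prod_one_sub_X_odd_pow_ne_zero (by norm_num) N
end

section
/- For every real number k ≥ 3, exp(π√(16k+11)) − (1/2)·(2π(16k+11))^{3/2}·exp((π/3)·√(16k+11)) − 2√(4k+3)·(exp(π√(4k+3)) + (1/2)·(2π(4k+3))^{3/2}·exp((π/3)·√(4k+3))) > 0. -/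
open Real

set_option maxHeartbeats 4000000

private lemma exp_ge_pow' (x : ℝ) (hx : 0 ≤ x) (n : ℕ) (hn : 0 < n) :
    (1 + x / n) ^ n ≤ Real.exp x := by
  have h1 : (1 : ℝ) + x / n ≤ Real.exp (x / n) := by
    have := Real.add_one_le_exp (x / n); linarith
  have h2 : (0:ℝ) ≤ 1 + x / n := by positivity
  calc (1 + x / n) ^ n ≤ (Real.exp (x / n)) ^ n := pow_le_pow_left₀ h2 h1 n
    _ = Real.exp x := by
        rw [← Real.exp_nat_mul]
        congr 1
        field_simp

private lemma rpow_32 (x : ℝ) (hx : 0 ≤ x) :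
    (2*π*x^2) ^ ((3:ℝ)/2) = (Real.sqrt (2*π))^3 * x^3 := by
  rw [show (3:ℝ)/2 = (1/2)*3 by norm_num]
  rw [Real.rpow_mul (by positivity), show ((3:ℝ)) = ((3:ℕ):ℝ) by norm_num,
    Real.rpow_natCast, ← Real.sqrt_eq_rpow, Real.sqrt_mul (by positivity), Real.sqrt_sq hx]
  ring


/-- For every real `k ≥ 3`,
`exp(π√(16k+11)) − (1/2)(2π(16k+11))^{3/2} exp((π/3)√(16k+11))
  − 2√(4k+3)(exp(π√(4k+3)) + (1/2)(2π(4k+3))^{3/2} exp((π/3)√(4k+3))) > 0`. -/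
theorem elementary_inequality_case_IV (k : ℝ) (hk : 3 ≤ k) :
    0 < Real.exp (π * Real.sqrt (16 * k + 11)) -
        (1 / 2) * (2 * π * (16 * k + 11)) ^ ((3 : ℝ) / 2) *
          Real.exp (π / 3 * Real.sqrt (16 * k + 11)) -
        2 * Real.sqrt (4 * k + 3) *
          (Real.exp (π * Real.sqrt (4 * k + 3)) +
            (1 / 2) * (2 * π * (4 * k + 3)) ^ ((3 : ℝ) / 2) *
              Real.exp (π / 3 * Real.sqrt (4 * k + 3))) := by
  have hπ1 : π ≤ 3.15 := by linarith [Real.pi_lt_d2]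
  have hπ0 : 3.14 ≤ π := by linarith [Real.pi_gt_d6]
  set a := Real.sqrt (16*k+11) with ha_def
  set b := Real.sqrt (4*k+3) with hb_def
  have hA0 : (0:ℝ) ≤ 16*k+11 := by linarith
  have hB0 : (0:ℝ) ≤ 4*k+3 := by linarith
  have ha2 : a^2 = 16*k+11 := Real.sq_sqrt hA0
  have hb2 : b^2 = 4*k+3 := Real.sq_sqrt hB0
  have ha0 : 0 ≤ a := Real.sqrt_nonneg _
  have hb0 : 0 ≤ b := Real.sqrt_nonneg _
  have ha : 7.6 ≤ a := by
    rw [ha_def]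
    have h := Real.sqrt_le_sqrt (show (7.6:ℝ)^2 ≤ 16*k+11 by nlinarith)
    rwa [Real.sqrt_sq (by norm_num)] at h
  have hb : 3.8 ≤ b := by
    rw [hb_def]
    have h := Real.sqrt_le_sqrt (show (3.8:ℝ)^2 ≤ 4*k+3 by nlinarith)
    rwa [Real.sqrt_sq (by norm_num)] at h
  -- bound on √(2π)
  have hs0 : 0 ≤ Real.sqrt (2*π) := Real.sqrt_nonneg _
  have hs : Real.sqrt (2*π) ≤ 2.51 := by
    have h := Real.sqrt_le_sqrt (show 2*π ≤ (2.51:ℝ)^2 by nlinarith)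
    rwa [Real.sqrt_sq (by norm_num)] at h
  have hs3 : (Real.sqrt (2*π))^3 ≤ 16 := by
    have := pow_le_pow_left₀ hs0 hs 3
    nlinarith
  -- rewrite the rpow terms
  have hX : (2*π*(16*k+11)) ^ ((3:ℝ)/2) ≤ 16*a^3 := by
    rw [← ha2, rpow_32 a ha0]
    nlinarith [pow_nonneg ha0 3]
  have hY : (2*π*(4*k+3)) ^ ((3:ℝ)/2) ≤ 16*b^3 := by
    rw [← hb2, rpow_32 b hb0]
    nlinarith [pow_nonneg hb0 3]
  -- main comparison: exp(πa) ≥ 0.79 exp(2πb)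
  have hprod : (2*b-a)*(2*b+a) = 1 := by nlinarith
  have hdiff : 2*b - a ≤ 0.066 := by nlinarith
  have hdpos : 0 < 2*b - a := by nlinarith
  have hexp1 : 2*π*b - 0.21 ≤ π*a := by
    nlinarith [mul_le_mul hπ1 hdiff (le_of_lt hdpos) (by norm_num : (0:ℝ) ≤ 3.15)]
  have hE : 0.79 * Real.exp (2*π*b) ≤ Real.exp (π*a) := by
    have h1 : Real.exp (2*π*b - 0.21) ≤ Real.exp (π*a) := Real.exp_le_exp.mpr hexp1
    have h2 : Real.exp (2*π*b - 0.21) = Real.exp (2*π*b) * Real.exp (-0.21) := by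
      rw [← Real.exp_add]; ring_nf
    have h3 : (0.79:ℝ) ≤ Real.exp (-0.21) := by
      have := Real.add_one_le_exp (-0.21); linarith
    have h4 : 0.79 * Real.exp (2*π*b) ≤ Real.exp (-0.21) * Real.exp (2*π*b) :=
      mul_le_mul_of_nonneg_right h3 (le_of_lt (Real.exp_pos _))
    calc 0.79 * Real.exp (2*π*b) ≤ Real.exp (-0.21) * Real.exp (2*π*b) := h4
      _ = Real.exp (2*π*b - 0.21) := by rw [← Real.exp_add]; ring_nf
      _ ≤ Real.exp (π*a) := h1
  -- Claim 1 : 8 a³ exp(π/3·a) < exp(πa)/3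
  have hC1 : 8*a^3 * Real.exp (π/3*a) < Real.exp (π*a) / 3 := by
    have h27 : a^3 ≤ 27 * Real.exp a := by
      have h4 := exp_ge_pow' a ha0 4 (by norm_num)
      push_cast at h4
      nlinarith [sq_nonneg a, sq_nonneg (a-2)]
    have hnum : (648:ℝ) < Real.exp ((2*π/3-1)*a) := by
      have h16 := exp_ge_pow' 8.3 (by norm_num) 16 (by norm_num)
      push_cast at h16
      have hmono : Real.exp 8.3 ≤ Real.exp ((2*π/3-1)*a) := Real.exp_le_exp.mpr (by nlinarith)
      have hval : (648:ℝ) < (1 + 8.3/16)^16 := by norm_num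
      linarith
    have hsplit : Real.exp (π*a) = Real.exp ((2*π/3-1)*a) * (Real.exp a * Real.exp (π/3*a)) := by
      rw [← Real.exp_add, ← Real.exp_add]; ring_nf
    have hp1 : 0 < Real.exp a * Real.exp (π/3*a) :=
      mul_pos (Real.exp_pos _) (Real.exp_pos _)
    have h5 : 648 * (Real.exp a * Real.exp (π/3*a)) < Real.exp (π*a) := by
      rw [hsplit]
      exact mul_lt_mul_of_pos_right hnum hp1
    have h6 : 8*a^3 * Real.exp (π/3*a) ≤ 216 * (Real.exp a * Real.exp (π/3*a)) := by
      nlinarith [Real.exp_pos (π/3*a)]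
    linarith
  -- Claim 2 : 2 b exp(πb) ≤ exp(πa)/3
  have hble : b ≤ Real.exp b := by
    have := Real.add_one_le_exp b; linarith
  have hC2 : 2*b * Real.exp (π*b) ≤ Real.exp (π*a) / 3 := by
    have hfac : 8 ≤ Real.exp ((π-1)*b) := by
      have := Real.add_one_le_exp ((π-1)*b)
      nlinarith
    have hsplit : Real.exp (π*b) = Real.exp b * Real.exp ((π-1)*b) := by
      rw [← Real.exp_add]; ring_nf
    have h1 : 2*b ≤ 0.26 * Real.exp (π*b) := by
      rw [hsplit]
      nlinarith [Real.exp_pos b, Real.exp_pos ((π-1)*b)]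
    have h2 : 2*b * Real.exp (π*b) ≤ 0.26 * (Real.exp (π*b) * Real.exp (π*b)) := by
      nlinarith [Real.exp_pos (π*b)]
    have h3 : Real.exp (π*b) * Real.exp (π*b) = Real.exp (2*π*b) := by
      rw [← Real.exp_add]; ring_nf
    rw [h3] at h2
    nlinarith [Real.exp_pos (2*π*b)]
  -- Claim 3 : 16 b⁴ exp(π/3·b) ≤ exp(πa)/3
  have hC3 : 16*b^4 * Real.exp (π/3*b) ≤ Real.exp (π*a) / 3 := by
    have hb4 : b^4 ≤ 256 * Real.exp b := by
      have h4 := exp_ge_pow' b hb0 4 (by norm_num)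
      push_cast at h4
      nlinarith [sq_nonneg b, sq_nonneg (b-2)]
    have hnum : (65536:ℝ) ≤ Real.exp ((5*π/3-1)*b) := by
      have h16 := exp_ge_pow' 16 (by norm_num) 16 (by norm_num)
      push_cast at h16
      have hmono : Real.exp 16 ≤ Real.exp ((5*π/3-1)*b) := Real.exp_le_exp.mpr (by nlinarith)
      have hval : (65536:ℝ) ≤ (1 + 16/16)^16 := by norm_num
      linarith
    have hsplit : Real.exp (2*π*b) = Real.exp ((5*π/3-1)*b) * (Real.exp b * Real.exp (π/3*b)) := by
      rw [← Real.exp_add, ← Real.exp_add]; ring_nf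
    have hp1 : 0 < Real.exp b * Real.exp (π/3*b) :=
      mul_pos (Real.exp_pos _) (Real.exp_pos _)
    have h5 : 65536 * (Real.exp b * Real.exp (π/3*b)) ≤ Real.exp (2*π*b) := by
      rw [hsplit]
      exact mul_le_mul_of_nonneg_right hnum (le_of_lt hp1)
    have h6 : 16*b^4 * Real.exp (π/3*b) ≤ 4096 * (Real.exp b * Real.exp (π/3*b)) := by
      nlinarith [Real.exp_pos (π/3*b)]
    linarith [hp1.le]
  -- assemble
  have hX' : (1/2) * (2*π*(16*k+11)) ^ ((3:ℝ)/2) ≤ 8*a^3 := by linarith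
  have e1 : (1/2) * (2*π*(16*k+11)) ^ ((3:ℝ)/2) * Real.exp (π/3*a) ≤ 8*a^3 * Real.exp (π/3*a) :=
    mul_le_mul_of_nonneg_right hX' (le_of_lt (Real.exp_pos _))
  have e2 : 2*b * ((1/2) * (2*π*(4*k+3)) ^ ((3:ℝ)/2) * Real.exp (π/3*b)) ≤ 16*b^4 * Real.exp (π/3*b) := by
    have hY' : (1/2) * (2*π*(4*k+3)) ^ ((3:ℝ)/2) ≤ 8*b^3 := by linarith
    have h1 : (1/2) * (2*π*(4*k+3)) ^ ((3:ℝ)/2) * Real.exp (π/3*b) ≤ 8*b^3 * Real.exp (π/3*b) :=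
      mul_le_mul_of_nonneg_right hY' (le_of_lt (Real.exp_pos _))
    calc 2*b * ((1/2) * (2*π*(4*k+3)) ^ ((3:ℝ)/2) * Real.exp (π/3*b))
        ≤ 2*b * (8*b^3 * Real.exp (π/3*b)) := mul_le_mul_of_nonneg_left h1 (by linarith)
      _ = 16*b^4 * Real.exp (π/3*b) := by ring
  have final : (1/2) * (2*π*(16*k+11)) ^ ((3:ℝ)/2) * Real.exp (π/3*a)
      + 2*b * (Real.exp (π*b) + (1/2) * (2*π*(4*k+3)) ^ ((3:ℝ)/2) * Real.exp (π/3*b))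
      < Real.exp (π*a) := by
    have : 2*b * (Real.exp (π*b) + (1/2) * (2*π*(4*k+3)) ^ ((3:ℝ)/2) * Real.exp (π/3*b))
        = 2*b*Real.exp (π*b) + 2*b*((1/2) * (2*π*(4*k+3)) ^ ((3:ℝ)/2) * Real.exp (π/3*b)) := by
      ring
    rw [this]
    linarith
  linarith [final]
end

section
/- Assume t(d) > 0 for d ≡ 0 (mod 4), t(d) < 0 for d ≡ 3 (mod 4) (d positive), t(d) = 0 for d ≡ 1, 2 (mod 4), t(0)=2, t(−1)=−1, t(d)=0 for d < −1, and the Zagier identity ∑_{|r|<2√n} t(4n−r²) ∈ {−4, 2, 0} according as n is a square, 4n+1 is a square, or neither, together with the bounds exp(π√d) − (1/2)(2πd)^{3/2}exp((π/3)√d) ≤ t(d) for d ≡ 0 (mod 4) and |t(d) + exp(π√d)| ≤ (1/2)(2πd)^{3/2}exp((π/3)√d) for d ≡ 3 (mod 4). Then for every integer k ≥ 3, the quantity ∑_{r∈ℤ} t(4k − r²) + ∑_{r ≥ 1, r odd} t(16k − r²) + 24 ∑_{d|k, d odd} d is negative. -/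
/-!
The first sum vanishes identically: beyond the range `r ^ 2 < 4 * k` of Zagier's identity, the
only nonzero terms are `t 0 = 2` at `r = ±√(4k)` and `t (-1) = -1` at `r = ±√(4k+1)`, and they
cancel the right-hand side `-4`, `2` or `0` exactly. For odd `r` every argument `16k - r ^ 2` is
`≡ 3 (mod 4)`, so the second sum is at most its `r = 1` term `t (16k - 1)`, which the asymptotic
bound puts below `-exp (π √(16k - 1)) / 2`; this beats `24 σ_odd(k) ≤ 24 k ^ 2`.
-/

open Real Set

section SumsOverSquares

variable {M : Type*} [AddCommMonoid M]

theorem finite_setOf_sq_le (N : ℤ) : {r : ℤ | r ^ 2 ≤ N}.Finite :=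
  (finite_Icc (-N) N).subset fun r (hr : r ^ 2 ≤ N) => by
    rw [mem_Icc]; constructor <;> nlinarith

theorem finsum_eq_sq_lt_add_sq_eq_add_sq_eq_add_one {g : ℤ → M} (N : ℤ)
    (hg : ∀ r, N + 1 < r ^ 2 → g r = 0) :
    ∑ᶠ r, g r = ∑ᶠ (r : ℤ) (_ : r ^ 2 < N), g r + ∑ᶠ r ∈ {r : ℤ | r ^ 2 = N}, g r +
      ∑ᶠ r ∈ {r : ℤ | r ^ 2 = N + 1}, g r := by
  have hfin : ∀ s ⊆ {r : ℤ | r ^ 2 ≤ N + 1}, s.Finite := fun s hs =>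
    (finite_setOf_sq_le _).subset hs
  have hsplit : {r : ℤ | r ^ 2 ≤ N + 1} =
      ({r | r ^ 2 < N} ∪ {r | r ^ 2 = N}) ∪ {r | r ^ 2 = N + 1} := by
    ext r; simp only [mem_ofPred_eq, mem_union]; omega
  have hdisj : Disjoint {r : ℤ | r ^ 2 < N} {r | r ^ 2 = N} :=
    disjoint_left.2 fun r (h1 : r ^ 2 < N) (h2 : r ^ 2 = N) => by omega
  have hdisj' : Disjoint ({r : ℤ | r ^ 2 < N} ∪ {r | r ^ 2 = N}) {r | r ^ 2 = N + 1} :=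
    disjoint_left.2 fun r h1 (h2 : r ^ 2 = N + 1) => by
      rcases h1 with (h1 : r ^ 2 < N) | (h1 : r ^ 2 = N) <;> omega
  rw [← finsum_mem_univ, finsum_mem_inter_support_eq' g univ {r | r ^ 2 ≤ N + 1}
    fun r hr => iff_of_true trivial (not_lt.1 (mt (hg r) hr)), hsplit,
    finsum_mem_union hdisj' (hfin _ (hsplit ▸ subset_union_left))
      (hfin _ (hsplit ▸ subset_union_right)),
    finsum_mem_union hdisj (hfin _ fun r (hr : r ^ 2 < N) => by simp only [mem_ofPred_eq]; omega)
      (hfin _ fun r (hr : r ^ 2 = N) => by simp only [mem_ofPred_eq]; omega)]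
  rfl

theorem finsum_mem_setOf_sq_eq_const (c : M) {n : ℤ} (hn : n ≠ 0) :
    ∑ᶠ _ ∈ {r : ℤ | r ^ 2 = n}, c = if IsSquare n then c + c else 0 := by
  split_ifs with hsq
  · obtain ⟨q, rfl⟩ := hsq
    have hq : q ≠ -q := fun h => hn (by rw [show q = 0 by omega, zero_mul])
    rw [show {r : ℤ | r ^ 2 = q * q} = {q, -q} by
      ext r; simp [← sq, sq_eq_sq_iff_eq_or_eq_neg]]
    exact finsum_mem_pair hq
  · rw [show {r : ℤ | r ^ 2 = n} = ∅ from
      eq_empty_of_forall_notMem fun r (hr : r ^ 2 = n) => hsq ⟨r, by rw [← hr, sq]⟩]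
    exact finsum_mem_empty

end SumsOverSquares

theorem finsum_mem_le_of_nonpos_of_ne {α M : Type*} [AddCommMonoid M] [PartialOrder M]
    [IsOrderedAddMonoid M] {f : α → M} {s : Set α} {a : α} (ha : a ∈ s)
    (hf : (s ∩ Function.support f).Finite) (h : ∀ x ∈ s, x ≠ a → f x ≤ 0) :
    ∑ᶠ x ∈ s, f x ≤ f a := by
  rw [← finsum_mem_add_sdiff' (singleton_subset_iff.2 ha) hf, finsum_mem_singleton]
  exact add_le_of_nonpos_right
    (finsum_mem_induction (· ≤ 0) le_rfl (fun _ _ => add_nonpos) fun x hx => h x hx.1 hx.2)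

theorem Int.isSquare_four_mul_iff {n : ℤ} : IsSquare (4 * n) ↔ IsSquare n := by
  constructor
  · rintro ⟨r, hr⟩
    obtain ⟨u, rfl⟩ : Even r := by
      have : Even (r * r) := ⟨2 * n, by omega⟩
      simpa [Int.even_mul] using this
    exact ⟨u, by linarith⟩
  · rintro ⟨m, rfl⟩
    exact ⟨2 * m, by ring⟩

theorem Int.not_isSquare_four_mul_add_one {n : ℤ} (hn : n ≠ 0) (hsq : IsSquare n) :
    ¬IsSquare (4 * n + 1) := by
  obtain ⟨m, rfl⟩ := hsq
  rintro ⟨q, hq⟩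
  rw [← abs_mul_abs_self m, ← abs_mul_abs_self q] at hq
  have hm : 1 ≤ |m| := Int.one_le_abs (by rintro rfl; simp at hn)
  rcases le_or_gt |q| (2 * |m|) with h | h <;> nlinarith [abs_nonneg q]

theorem sum_filter_divisors_le_sq (p : ℕ → Prop) [DecidablePred p] (k : ℕ) :
    ∑ d ∈ k.divisors.filter p, (d : ℝ) ≤ (k : ℝ) ^ 2 := by
  have h : ∑ d ∈ k.divisors.filter p, d ≤ k ^ 2 :=
    (Finset.sum_le_sum_of_subset (Finset.filter_subset p _)).trans
      (by simpa [ArithmeticFunction.sigma_apply] using ArithmeticFunction.sigma_le_pow_succ 1 k)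
  rw [← Nat.cast_sum, ← Nat.cast_pow, Nat.cast_le]
  exact h

theorem rpow_three_halves_le_exp {d : ℝ} (hd : 36 ≤ d) :
    (2 * π * d) ^ ((3 : ℝ) / 2) ≤ exp (2 * π / 3 * √d) := by
  set x := √d
  have hx6 : 6 ≤ x := le_sqrt_of_sq_le (by linarith)
  have hdx : d = x ^ 2 := (sq_sqrt (by linarith)).symm
  have hcube : (2 * π * d) ^ ((3 : ℝ) / 2) ≤ (3 * x) ^ 3 := calc
    (2 * π * d) ^ ((3 : ℝ) / 2) ≤ ((3 * x) ^ 2) ^ ((3 : ℝ) / 2) := by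
      gcongr
      nlinarith [pi_lt_d2]
    _ = (3 * x) ^ 3 := by
      rw [rpow_div_two_eq_sqrt _ (by positivity), sqrt_sq (by positivity)]
      exact_mod_cast rpow_natCast (3 * x) 3
  have hpoly : (3 * x) ^ 3 ≤ (2 * x) ^ 7 / (Nat.factorial 7 : ℝ) := by
    rw [show ((Nat.factorial 7 : ℕ) : ℝ) = 5040 by norm_num [Nat.factorial]]
    have hx4 : 1296 ≤ x ^ 4 := by nlinarith
    nlinarith [pow_nonneg (by linarith : (0 : ℝ) ≤ x) 3,
      mul_le_mul_of_nonneg_left hx4 (pow_nonneg (by linarith : (0 : ℝ) ≤ x) 3)]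
  calc (2 * π * d) ^ ((3 : ℝ) / 2) ≤ (2 * x) ^ 7 / (Nat.factorial 7 : ℝ) := hcube.trans hpoly
    _ ≤ exp (2 * x) := pow_div_factorial_le_exp _ (by linarith) 7
    _ ≤ exp (2 * π / 3 * x) := exp_le_exp.2 (by nlinarith [pi_gt_three])

theorem le_neg_half_exp_of_abs_add_exp_le {y d : ℝ} (hd : 36 ≤ d)
    (h : |y + exp (π * √d)| ≤ 1 / 2 * (2 * π * d) ^ ((3 : ℝ) / 2) * exp (π / 3 * √d)) :
    y ≤ -exp (π * √d) / 2 := by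
  have hsplit : exp (2 * π / 3 * √d) * exp (π / 3 * √d) = exp (π * √d) := by
    rw [← exp_add]; ring_nf
  have herr := mul_le_mul_of_nonneg_right (rpow_three_halves_le_exp hd) (exp_pos (π / 3 * √d)).le
  linarith [(abs_le.1 h).2]

theorem mul_sq_lt_exp_pi_sqrt {k : ℝ} (hk : 1 ≤ k) :
    48 * k ^ 2 < exp (π * √(16 * k - 1)) := by
  set x := √(16 * k - 1)
  have hx0 : 0 ≤ x := sqrt_nonneg _
  have hx2 : x ^ 2 = 16 * k - 1 := sq_sqrt (by linarith)
  have hx4 : (15 * k) ^ 2 ≤ x ^ 4 := by nlinarith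
  calc 48 * k ^ 2 < (3 * x) ^ 4 / (Nat.factorial 4 : ℝ) := by
        rw [show ((Nat.factorial 4 : ℕ) : ℝ) = 24 by norm_num [Nat.factorial]]; nlinarith
    _ ≤ exp (3 * x) := pow_div_factorial_le_exp _ (by linarith) 4
    _ ≤ exp (π * x) := exp_le_exp.2 (by nlinarith [pi_gt_three])

section Traces

variable {t : ℤ → ℝ}

theorem trace_nonpos_of_emod_four_eq_three (hneg3 : ∀ d : ℤ, 0 < d → d % 4 = 3 → t d < 0)
    (hmone : t (-1) = -1) (hlow : ∀ d : ℤ, d < -1 → t d = 0) {d : ℤ} (hd : d % 4 = 3) :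
    t d ≤ 0 := by
  rcases lt_trichotomy d (-1) with h | rfl | h
  · exact (hlow d h).le
  · rw [hmone]; norm_num
  · exact (hneg3 d (by omega) hd).le

theorem finsum_trace_four_mul_sub_sq_eq_zero (hzero : t 0 = 2) (hmone : t (-1) = -1)
    (hlow : ∀ d : ℤ, d < -1 → t d = 0) {n : ℤ} (hn : n ≠ 0)
    (hZagier : (∑ᶠ (r : ℤ) (_ : r ^ 2 < 4 * n), t (4 * n - r ^ 2)) =
      if IsSquare n then -4 else if IsSquare (4 * n + 1) then 2 else 0) :
    ∑ᶠ r : ℤ, t (4 * n - r ^ 2) = 0 := by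
  have hroot : ∑ᶠ r ∈ {r : ℤ | r ^ 2 = 4 * n}, t (4 * n - r ^ 2) =
      if IsSquare n then 4 else 0 := by
    have hconst : ∀ r ∈ {r : ℤ | r ^ 2 = 4 * n}, t (4 * n - r ^ 2) = t 0 := fun r hr => by
      rw [show r ^ 2 = 4 * n from hr, sub_self]
    rw [finsum_mem_congr rfl hconst, finsum_mem_setOf_sq_eq_const _ (by omega)]
    simp only [Int.isSquare_four_mul_iff, hzero]
    norm_num
  have hroot' : ∑ᶠ r ∈ {r : ℤ | r ^ 2 = 4 * n + 1}, t (4 * n - r ^ 2) =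
      if IsSquare (4 * n + 1) then -2 else 0 := by
    have hconst : ∀ r ∈ {r : ℤ | r ^ 2 = 4 * n + 1}, t (4 * n - r ^ 2) = t (-1) :=
      fun r hr => by
        rw [show r ^ 2 = 4 * n + 1 from hr, sub_add_cancel_left]
    rw [finsum_mem_congr rfl hconst, finsum_mem_setOf_sq_eq_const _ (by omega), hmone]
    norm_num
  rw [finsum_eq_sq_lt_add_sq_eq_add_sq_eq_add_one (4 * n) fun r hr => hlow _ (by omega),
    hZagier, hroot, hroot']
  by_cases hsq : IsSquare n
  · simp [hsq, Int.not_isSquare_four_mul_add_one hn hsq]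
  · by_cases hsq' : IsSquare (4 * n + 1) <;> simp [hsq, hsq']

theorem finsum_trace_sub_odd_sq_le (hneg3 : ∀ d : ℤ, 0 < d → d % 4 = 3 → t d < 0)
    (hmone : t (-1) = -1) (hlow : ∀ d : ℤ, d < -1 → t d = 0) {N : ℤ} (hN : N % 4 = 0) :
    ∑ᶠ (r : ℤ) (_ : 1 ≤ r ∧ Odd r), t (N - r ^ 2) ≤ t (N - 1) := by
  have hfin : ({r : ℤ | 1 ≤ r ∧ Odd r} ∩ Function.support fun r => t (N - r ^ 2)).Finite :=
    (finite_setOf_sq_le (N + 1)).subset fun r ⟨_, hr⟩ =>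
      show r ^ 2 ≤ N + 1 from not_lt.1 fun h => hr (hlow _ (by omega))
  simpa using finsum_mem_le_of_nonpos_of_ne (s := {r : ℤ | 1 ≤ r ∧ Odd r}) (a := 1)
    ⟨le_rfl, odd_one⟩ hfin fun r ⟨_, ⟨j, hj⟩⟩ _ =>
      trace_nonpos_of_emod_four_eq_three hneg3 hmone hlow
        (by rw [show r ^ 2 = 4 * (j ^ 2 + j) + 1 by rw [hj]; ring]; omega)

end Traces

open Real in
open scoped Classical in
theorem case_I_negative_general (t : ℤ → ℝ)
    (hneg3 : ∀ d : ℤ, 0 < d → d % 4 = 3 → t d < 0)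
    (hzero : t 0 = 2) (hmone : t (-1) = -1)
    (hlow : ∀ d : ℤ, d < -1 → t d = 0)
    (hZagier : ∀ n : ℕ, 0 < n →
      (∑ᶠ (r : ℤ) (_ : r ^ 2 < 4 * (n : ℤ)), t (4 * n - r ^ 2)) =
        if IsSquare (n : ℤ) then -4
        else if IsSquare (4 * (n : ℤ) + 1) then 2
        else 0)
    (hbd3 : ∀ d : ℤ, 0 < d → d % 4 = 3 →
      |t d + Real.exp (π * Real.sqrt d)| ≤
        (1 / 2) * (2 * π * d) ^ ((3 : ℝ) / 2) * Real.exp (π / 3 * Real.sqrt d))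
    (k : ℕ) (hk : 3 ≤ k) :
    (∑ᶠ r : ℤ, t (4 * k - r ^ 2)) +
        (∑ᶠ (r : ℤ) (_ : 1 ≤ r ∧ Odd r), t (16 * k - r ^ 2)) +
        24 * ∑ d ∈ k.divisors.filter (fun d => Odd d), (d : ℝ) < 0 := by
  have hkR : (3 : ℝ) ≤ k := by exact_mod_cast hk
  have hd : ((16 * k - 1 : ℤ) : ℝ) = 16 * k - 1 := by push_cast; ring
  have hS1 := finsum_trace_four_mul_sub_sq_eq_zero hzero hmone hlow (n := k) (by omega)
    (hZagier k (by omega))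
  have hS2 := finsum_trace_sub_odd_sq_le hneg3 hmone hlow (N := 16 * k) (by omega)
  have ht := le_neg_half_exp_of_abs_add_exp_le (by rw [hd]; linarith)
    (hbd3 (16 * k - 1) (by omega) (by omega))
  rw [hd] at ht
  have hexp := mul_sq_lt_exp_pi_sqrt (k := k) (by linarith)
  have hσ := sum_filter_divisors_le_sq (fun d => Odd d) k
  linarith

open Real in
open scoped Classical in
/-- Case I of the proof: under the known properties of the traces of singular moduli `t`,
for every `k ≥ 3` the quantity
`∑_{r∈ℤ} t(4k − r²) + ∑_{r ≥ 1 odd} t(16k − r²) + 24 ∑_{d∣k, d odd} d` is negative. -/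
theorem case_I_negative (t : ℤ → ℝ)
    (hpos : ∀ d : ℤ, 0 < d → d % 4 = 0 → 0 < t d)
    (hneg3 : ∀ d : ℤ, 0 < d → d % 4 = 3 → t d < 0)
    (hvan : ∀ d : ℤ, d % 4 = 1 ∨ d % 4 = 2 → t d = 0)
    (hzero : t 0 = 2) (hmone : t (-1) = -1)
    (hlow : ∀ d : ℤ, d < -1 → t d = 0)
    (hZagier : ∀ n : ℕ, 0 < n →
      (∑ᶠ (r : ℤ) (_ : r ^ 2 < 4 * (n : ℤ)), t (4 * n - r ^ 2)) =
        if IsSquare (n : ℤ) then -4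
        else if IsSquare (4 * (n : ℤ) + 1) then 2
        else 0)
    (hbd0 : ∀ d : ℤ, 0 < d → d % 4 = 0 →
      Real.exp (π * Real.sqrt d) -
          (1 / 2) * (2 * π * d) ^ ((3 : ℝ) / 2) * Real.exp (π / 3 * Real.sqrt d) ≤ t d)
    (hbd3 : ∀ d : ℤ, 0 < d → d % 4 = 3 →
      |t d + Real.exp (π * Real.sqrt d)| ≤
        (1 / 2) * (2 * π * d) ^ ((3 : ℝ) / 2) * Real.exp (π / 3 * Real.sqrt d))
    (k : ℕ) (hk : 3 ≤ k) :
    (∑ᶠ r : ℤ, t (4 * k - r ^ 2)) +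
        (∑ᶠ (r : ℤ) (_ : 1 ≤ r ∧ Odd r), t (16 * k - r ^ 2)) +
        24 * ∑ d ∈ k.divisors.filter (fun d => Odd d), (d : ℝ) < 0 :=
  case_I_negative_general t hneg3 hzero hmone hlow hZagier hbd3 k hk
end

section
/- Assume t(d) = 0 whenever d ≡ 1 or 2 (mod 4) or d < −1, t(0) = 2, t(−1) = −1, t(d) > 0 for positive d ≡ 0 (mod 4), and t(d) < 0 for positive d ≡ 3 (mod 4). Then for every integer k ≥ 1, the quantity ∑_{r∈ℤ} t(4k+1 − r²) − ∑_{r ≥ 1, r odd} t(16k+4 − r²) + 24 σ(4k+1) is positive, where σ denotes the sum-of-divisors function. -/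
/-- Case III of the proof: under the sign properties of the traces of singular moduli `t`,
for every `k ≥ 1` the quantity
`∑_{r∈ℤ} t(4k+1 − r²) − ∑_{r ≥ 1 odd} t(16k+4 − r²) + 24 σ(4k+1)` is positive. -/
theorem case_III_positive (t : ℤ → ℝ)
    (hvan : ∀ d : ℤ, d % 4 = 1 ∨ d % 4 = 2 → t d = 0)
    (hlow : ∀ d : ℤ, d < -1 → t d = 0)
    (hzero : t 0 = 2) (hmone : t (-1) = -1)
    (hpos : ∀ d : ℤ, 0 < d → d % 4 = 0 → 0 < t d)
    (hneg3 : ∀ d : ℤ, 0 < d → d % 4 = 3 → t d < 0)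
    (k : ℕ) (hk : 1 ≤ k) :
    0 < (∑ᶠ r : ℤ, t (4 * k + 1 - r ^ 2)) -
          (∑ᶠ (r : ℤ) (_ : 1 ≤ r ∧ Odd r), t (16 * k + 4 - r ^ 2)) +
          24 * ∑ d ∈ (4 * k + 1).divisors, (d : ℝ) := by
  have hA : 0 ≤ ∑ᶠ r : ℤ, t (4 * k + 1 - r ^ 2) := by
    apply finsum_nonneg
    intro r
    set d : ℤ := 4 * k + 1 - r ^ 2 with hd
    rcases Int.even_or_odd r with ⟨m, hm⟩ | ⟨m, hm⟩
    · have h1 : d % 4 = 1 := by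
        have : r ^ 2 = 4 * m ^ 2 := by rw [hm]; ring
        omega
      rw [hvan d (Or.inl h1)]
    · have h0 : d % 4 = 0 := by
        have : r ^ 2 = 4 * (m ^ 2 + m) + 1 := by rw [hm]; ring
        omega
      rcases lt_trichotomy d 0 with h | h | h
      · rw [hlow d (by omega)]
      · rw [h, hzero]; norm_num
      · exact le_of_lt (hpos d h h0)
  have hB : (∑ᶠ (r : ℤ) (_ : 1 ≤ r ∧ Odd r), t (16 * k + 4 - r ^ 2)) ≤ 0 := by
    have key : ∀ r : ℤ, (∑ᶠ _ : 1 ≤ r ∧ Odd r, t (16 * k + 4 - r ^ 2)) ≤ 0 := by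
      intro r
      classical
      rw [finsum_eq_if]
      split_ifs with h
      · obtain ⟨h1, m, hm⟩ := h
        set d : ℤ := 16 * k + 4 - r ^ 2 with hd
        have h3 : d % 4 = 3 := by
          have : r ^ 2 = 4 * (m ^ 2 + m) + 1 := by rw [hm]; ring
          omega
        rcases lt_trichotomy d 0 with hlt | heq | hgt
        · rcases eq_or_lt_of_le (show d ≤ -1 by omega) with he | hl
          · rw [he, hmone]; norm_num
          · rw [hlow d hl]
        · omega
        · exact le_of_lt (hneg3 d hgt h3)
      · exact le_refl 0
    have : 0 ≤ ∑ᶠ (r : ℤ), -(∑ᶠ _ : 1 ≤ r ∧ Odd r, t (16 * k + 4 - r ^ 2)) :=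
      finsum_nonneg fun r => neg_nonneg.mpr (key r)
    rw [finsum_neg_distrib] at this
    linarith
  have hC : (0 : ℝ) < ∑ d ∈ (4 * k + 1).divisors, (d : ℝ) := by
    apply Finset.sum_pos
    · intro d hd
      have := Nat.pos_of_mem_divisors hd
      positivity
    · exact ⟨1, Nat.one_mem_divisors.mpr (by omega)⟩
  linarith
end
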